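/- Let m ≡ 0 (mod 4), p prime with m/4 < p ≤ m/2, and a = m - 4p. Let G be the graph whose vertices are the vectors in {-1,1}^m with zero coordinate sum, with x adjacent to y iff (x,y) = a. Then the chromatic number of G is at least C(m, m/2) / C(m, p). -/

import Mathlib

/-!
Identify a vertex `x` with its set of `+1` coordinates, a `k`-subset of `[m]` with `k = m / 2`.
Then `⟪x, y⟫ = m - 4p` exactly when the two sets meet in `k - p` points, so every colour class
is a `k`-uniform family with no intersection of size `k - p`, and it suffices to bound such
families by `C(m, p)`.

This is the Frankl–Wilson polynomial method over `𝔽_p`. For `A` in the family, the functions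
`B ↦ ∏_{c ≠ k} (|A ∩ B| - c)` on `k`-sets vanish at every other member of the family (as
`0 < k - |A ∩ B| < 2p` and `k - |A ∩ B| ≠ p`) but not at `A`, so they are linearly
independent. They are polynomials of degree `p - 1`. On `k`-sets the identity
`∑_{i ∉ S} x_{S ∪ {i}} = (k - |S|) x_S` raises the degree of a monomial `x_S` whenever
`k - |S| ≢ 0 (mod p)`, which for `|S| < p - 1` fails only at `|S| = k - p`. So the functions lie
in the span of the monomials of degree exactly `p - 1` or `k - p`, and the family has at most
`C(m, p - 1) + C(m, k - p) ≤ C(m, p)` members.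
-/

open Finset

theorem Nat.choose_le_choose_of_le_half {n r s : ℕ} (hrs : r ≤ s) (hs : s ≤ n / 2) :
    n.choose r ≤ n.choose s := by
  induction s, hrs using Nat.le_induction with
  | base => exact le_rfl
  | succ s _ ih => exact (ih (by omega)).trans (Nat.choose_le_succ_of_lt_half_left (by omega))

theorem Nat.choose_sub_one_add_choose_sub_le {p k : ℕ} (hpk : p ≤ k) (hk : k + 2 ≤ 2 * p) :
    (2 * k).choose (p - 1) + (2 * k).choose (k - p) ≤ (2 * k).choose p := by
  obtain ⟨d, rfl⟩ := Nat.exists_eq_add_of_le hpk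
  obtain ⟨q, rfl⟩ : ∃ q, p = q + 1 := ⟨p - 1, by omega⟩
  rw [Nat.add_sub_cancel, Nat.add_sub_cancel_left]
  set n := 2 * (q + 1 + d) with hn
  have hp : n.choose (q + 1) * (q + 1) = n.choose q * (q + 2 + 2 * d) := by
    rw [Nat.choose_succ_right_eq]; congr 1; omega
  have hd : n.choose (d + 1) * (d + 1) = n.choose d * (2 * q + 2 + d) := by
    rw [Nat.choose_succ_right_eq]; congr 1; omega
  have hmono : n.choose (d + 1) ≤ n.choose q :=
    Nat.choose_le_choose_of_le_half (by omega) (by omega)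
  have key : (q + 1) * n.choose d ≤ (2 * d + 1) * n.choose q := by
    refine Nat.le_of_mul_le_mul_right (c := 2 * q + 2 + d) ?_ (by omega)
    calc (q + 1) * n.choose d * (2 * q + 2 + d) = (q + 1) * (d + 1) * n.choose (d + 1) := by
          rw [mul_assoc, ← hd]; ring
      _ ≤ (2 * d + 1) * (2 * q + 2 + d) * n.choose q := Nat.mul_le_mul (by nlinarith) hmono
      _ = (2 * d + 1) * n.choose q * (2 * q + 2 + d) := by ring
  refine Nat.le_of_mul_le_mul_right (c := q + 1) ?_ (by omega)
  nlinarith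

theorem ZMod.natCast_ne_zero_of_pos_of_lt_two_mul {p n : ℕ} (hn : 0 < n) (hn2 : n < 2 * p)
    (hnp : n ≠ p) : (n : ZMod p) ≠ 0 := by
  rw [Ne, ZMod.natCast_eq_zero_iff]
  rintro ⟨c, rfl⟩
  rcases c with _ | _ | c <;> simp_all
  nlinarith

theorem LinearIndependent.of_apply_diagonal {ι X K : Type*} [Ring K] [NoZeroDivisors K]
    (v : ι → X → K) (x : ι → X) (hdiag : ∀ i, v i (x i) ≠ 0)
    (hoff : ∀ i j, i ≠ j → v i (x j) = 0) : LinearIndependent K v := by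
  classical
  rw [linearIndependent_iff']
  intro s g hsum i hi
  have hx := congrFun hsum (x i)
  rw [Finset.sum_apply, Finset.sum_eq_single i (fun j _ hji => by simp [hoff j i hji])
    (fun h => absurd hi h)] at hx
  simpa [hdiag i] using hx

theorem SimpleGraph.card_le_mul_chromaticNumber {V : Type*} [Fintype V] (G : SimpleGraph V)
    {s : ℕ} (h : ∀ t : Finset V, G.IsIndepSet t → t.card ≤ s) :
    (Fintype.card V : ℕ∞) ≤ s * G.chromaticNumber := by
  classical
  obtain ⟨n, hn⟩ := ENat.ne_top_iff_exists.mp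
    (chromaticNumber_ne_top_iff_exists.mpr ⟨_, G.colorable_of_fintype⟩)
  obtain ⟨C⟩ := chromaticNumber_le_iff_colorable.mp hn.ge
  rw [← hn]
  norm_cast
  calc Fintype.card V = ∑ j : Fin n, (univ.filter (C · = j)).card :=
        card_eq_sum_card_fiberwise fun _ _ => mem_univ _
    _ ≤ ∑ _j : Fin n, s :=
        sum_le_sum fun j _ => h _ (by simpa [Coloring.colorClass] using C.isIndepSet_colorClass j)
    _ = s * n := by simp [mul_comm]

namespace FranklWilson

variable {α : Type*} [DecidableEq α] (R : Type*) [CommRing R] (k : ℕ)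

/-- The monomial `∏_{i ∈ S} xᵢ`, evaluated at the characteristic vectors of the `k`-sets. -/
def subsetIndicator (S : Finset α) : {B : Finset α // B.card = k} → R :=
  fun B => if S ⊆ B.1 then 1 else 0

def intersectionCard (A : Finset α) : {B : Finset α // B.card = k} → R :=
  fun B => ((A ∩ B.1).card : R)

def levelSpan (D : Set ℕ) : Submodule R ({B : Finset α // B.card = k} → R) :=
  Submodule.span R (subsetIndicator R k '' {S | S.card ∈ D})

variable {R k}

theorem subsetIndicator_mul (S T : Finset α) :
    subsetIndicator R k S * subsetIndicator R k T = subsetIndicator R k (S ∪ T) := by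
  funext B
  simp only [subsetIndicator, Pi.mul_apply, union_subset_iff]
  split_ifs <;> simp_all

theorem subsetIndicator_empty : subsetIndicator R k (∅ : Finset α) = 1 := by
  funext B
  simp [subsetIndicator]

theorem intersectionCard_eq_sum (A : Finset α) :
    intersectionCard R k A = ∑ i ∈ A, subsetIndicator R k {i} := by
  funext B
  simp [intersectionCard, subsetIndicator]

theorem sum_subsetIndicator_insert [Fintype α] (S : Finset α) :
    ∑ i ∈ Sᶜ, subsetIndicator R k (insert i S) =
      ((k - S.card : ℕ) : R) • subsetIndicator R k S := by
  funext B
  simp only [Finset.sum_apply, Pi.smul_apply, subsetIndicator, insert_subset_iff, smul_eq_mul]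
  by_cases hSB : S ⊆ B.1
  · have hfilter : Sᶜ.filter (· ∈ B.1) = B.1 \ S := by ext i; simp [and_comm]
    simp only [hSB, and_true, if_true, mul_one, sum_boole, hfilter, card_sdiff_of_subset hSB, B.2]
  · simp [hSB]

theorem levelSpan_mono {D E : Set ℕ} (h : D ⊆ E) :
    levelSpan R k D ≤ levelSpan (α := α) R k E :=
  Submodule.span_mono (Set.image_mono fun _ hS => h hS)

theorem intersectionCard_mul_mem_levelSpan {A : Finset α} {j : ℕ}
    {g : {B : Finset α // B.card = k} → R} (hg : g ∈ levelSpan R k (Set.Iic j)) :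
    intersectionCard R k A * g ∈ levelSpan R k (Set.Iic (j + 1)) := by
  suffices (levelSpan R k (Set.Iic j)).map (LinearMap.mulLeft R (intersectionCard R k A)) ≤
      levelSpan R k (Set.Iic (j + 1)) from this ⟨g, hg, rfl⟩
  rw [levelSpan, Submodule.map_span, Submodule.span_le]
  rintro _ ⟨_, ⟨S, hS, rfl⟩, rfl⟩
  rw [LinearMap.mulLeft_apply, intersectionCard_eq_sum, sum_mul]
  refine Submodule.sum_mem _ fun i _ => ?_
  rw [subsetIndicator_mul, singleton_union]
  exact Submodule.subset_span ⟨_, (card_insert_le i S).trans (Nat.succ_le_succ hS), rfl⟩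

theorem prod_intersectionCard_sub_mem_levelSpan (A : Finset α) (t : Finset R) :
    ∏ c ∈ t, (intersectionCard R k A - Function.const _ c) ∈
      levelSpan R k (Set.Iic t.card) := by
  classical
  induction t using Finset.induction_on with
  | empty =>
    rw [prod_empty, ← subsetIndicator_empty]
    exact Submodule.subset_span ⟨∅, by simp, rfl⟩
  | insert c t hc ih =>
    rw [prod_insert hc, card_insert_of_notMem hc, sub_mul]
    refine Submodule.sub_mem _ (intersectionCard_mul_mem_levelSpan ih) ?_
    have hconst : Function.const _ c * ∏ c ∈ t, (intersectionCard R k A - Function.const _ c) =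
        c • ∏ c ∈ t, (intersectionCard R k A - Function.const _ c) := by ext; simp
    rw [hconst]
    exact Submodule.smul_mem _ _ (levelSpan_mono (Set.Iic_subset_Iic.mpr t.card.le_succ) ih)

theorem card_le_of_linearIndependent_of_mem_levelSpan [Fintype α] [StrongRankCondition R]
    {ι : Type*} [Fintype ι] {v : ι → {B : Finset α // B.card = k} → R}
    (hv : LinearIndependent R v)
    {a b : ℕ} (hmem : ∀ i, v i ∈ levelSpan R k {a, b}) :
    Fintype.card ι ≤ (Fintype.card α).choose a + (Fintype.card α).choose b := by
  classical
  set T := powersetCard a (univ : Finset α) ∪ powersetCard b univ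
  have hT : {S : Finset α | S.card ∈ ({a, b} : Set ℕ)} = ↑T := by ext S; simp [T]
  have hspan : Set.range v ≤
      Submodule.span R
        (↑(T.image (subsetIndicator R k)) : Set ({B : Finset α // B.card = k} → R)) := by
    rintro _ ⟨i, rfl⟩
    rw [coe_image, ← hT]
    exact hmem i
  have hcard := linearIndependent_le_span' _ hv _ hspan
  simp only [Cardinal.mk_fintype, Finset.coe_sort_coe, Fintype.card_coe, Nat.cast_le] at hcard
  calc Fintype.card ι ≤ (T.image (subsetIndicator R k)).card := hcard
    _ ≤ T.card := card_image_le
    _ ≤ _ := card_union_le _ _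
    _ = _ := by simp [card_powersetCard]

theorem natCast_card_inter_ne {p : ℕ} {A B : Finset α} (hk : k < 2 * p) (hA : A.card = k)
    (hB : B.card = k) (hAB : A ≠ B) (hAB' : (A ∩ B).card ≠ k - p) :
    ((A ∩ B).card : ZMod p) ≠ k := by
  have hle : (A ∩ B).card ≤ k := hA ▸ card_le_card inter_subset_left
  have hlt : (A ∩ B).card < k := by
    refine hle.lt_of_ne fun h => hAB ?_
    have hA' := eq_of_subset_of_card_le (s := A ∩ B) inter_subset_left (by rw [h, hA])
    have hB' := eq_of_subset_of_card_le (s := A ∩ B) inter_subset_right (by rw [h, hB])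
    exact hA'.symm.trans hB'
  intro h
  refine ZMod.natCast_ne_zero_of_pos_of_lt_two_mul (p := p) (n := k - (A ∩ B).card)
    (by omega) (by omega) (by omega) ?_
  rw [Nat.cast_sub hle, h, sub_self]

variable {p : ℕ}

def intersectionPoly (p k : ℕ) [NeZero p] (A : Finset α) :
    {B : Finset α // B.card = k} → ZMod p :=
  ∏ c ∈ univ.erase (k : ZMod p), (intersectionCard (ZMod p) k A - Function.const _ c)

variable [Fact p.Prime]

theorem intersectionPoly_apply_eq_zero_iff (A : Finset α)
    (B : {B : Finset α // B.card = k}) :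
    intersectionPoly p k A B = 0 ↔ ((A ∩ B.1).card : ZMod p) ≠ k := by
  simp [intersectionPoly, Finset.prod_apply, intersectionCard, prod_eq_zero_iff, sub_eq_zero]

variable [Fintype α]

theorem subsetIndicator_mem_levelSpan (hpk : p ≤ k) (hk : k < 2 * p) {S : Finset α}
    (hS : S.card ≤ p - 1) :
    subsetIndicator (ZMod p) k S ∈ levelSpan (ZMod p) k {p - 1, k - p} := by
  obtain ⟨n, hn⟩ : ∃ n, S.card + n = p - 1 := ⟨_, Nat.add_sub_of_le hS⟩
  induction n generalizing S with
  | zero => exact Submodule.subset_span ⟨S, Or.inl (by omega), rfl⟩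
  | succ n ih =>
    by_cases hSk : S.card = k - p
    · exact Submodule.subset_span ⟨S, Or.inr hSk, rfl⟩
    have hunit : ((k - S.card : ℕ) : ZMod p) ≠ 0 :=
      ZMod.natCast_ne_zero_of_pos_of_lt_two_mul (by omega) (by omega) (by omega)
    rw [← inv_smul_smul₀ hunit (subsetIndicator _ k S), ← sum_subsetIndicator_insert]
    refine Submodule.smul_mem _ _ (Submodule.sum_mem _ fun i hi => ?_)
    have hcard := card_insert_of_notMem (mem_compl.mp hi)
    exact ih (by omega) (by omega)

theorem intersectionPoly_mem_levelSpan (hpk : p ≤ k) (hk : k < 2 * p) (A : Finset α) :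
    intersectionPoly p k A ∈ levelSpan (ZMod p) k {p - 1, k - p} := by
  have hdeg := prod_intersectionCard_sub_mem_levelSpan (k := k) A (univ.erase (k : ZMod p))
  rw [card_erase_of_mem (mem_univ _), card_univ, ZMod.card] at hdeg
  refine Submodule.span_le.mpr ?_ hdeg
  rintro _ ⟨S, hS, rfl⟩
  exact subsetIndicator_mem_levelSpan hpk hk hS

theorem card_le_choose_add_choose (hpk : p ≤ k) (hk : k < 2 * p) (F : Finset (Finset α))
    (hF : ∀ A ∈ F, A.card = k)
    (hFinter : ∀ A ∈ F, ∀ B ∈ F, A ≠ B → (A ∩ B).card ≠ k - p) :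
    F.card ≤ (Fintype.card α).choose (p - 1) + (Fintype.card α).choose (k - p) := by
  have hindep : LinearIndependent (ZMod p) fun A : F => intersectionPoly p k A.1 := by
    refine LinearIndependent.of_apply_diagonal _ (fun A => ⟨A.1, hF A.1 A.2⟩) (fun A => ?_)
      fun A B hAB => ?_
    · simp [intersectionPoly_apply_eq_zero_iff, hF A.1 A.2]
    · rw [intersectionPoly_apply_eq_zero_iff]
      exact natCast_card_inter_ne hk (hF A.1 A.2) (hF B.1 B.2) (Subtype.coe_injective.ne hAB)
        (hFinter A.1 A.2 B.1 B.2 (Subtype.coe_injective.ne hAB))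
  simpa using card_le_of_linearIndependent_of_mem_levelSpan hindep
    fun A => intersectionPoly_mem_levelSpan hpk hk A.1

end FranklWilson

section SignVector

variable {ι : Type*} [DecidableEq ι]

def signVector (S : Finset ι) : ι → ℤ := fun i => if i ∈ S then 1 else -1

theorem signVector_eq_one_or_neg_one (S : Finset ι) (i : ι) :
    signVector S i = 1 ∨ signVector S i = -1 := by
  unfold signVector; split_ifs <;> simp

variable [Fintype ι]

theorem sum_signVector (S : Finset ι) :
    ∑ i, signVector S i = 2 * S.card - Fintype.card ι := by
  have h : ∀ i, signVector S i = 2 * (if i ∈ S then 1 else 0) - 1 := fun i => by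
    unfold signVector; split_ifs <;> simp
  simp only [h, sum_sub_distrib, ← mul_sum, sum_boole, filter_mem_eq_inter, univ_inter]
  simp

theorem sum_signVector_mul (S T : Finset ι) :
    ∑ i, signVector S i * signVector T i =
      Fintype.card ι + 4 * (S ∩ T).card - 2 * S.card - 2 * T.card := by
  have h : ∀ i, signVector S i * signVector T i = 1 + 4 * (if i ∈ S ∩ T then 1 else 0)
      - 2 * (if i ∈ S then 1 else 0) - 2 * (if i ∈ T then 1 else 0) := fun i => by
    unfold signVector; by_cases hS : i ∈ S <;> by_cases hT : i ∈ T <;> simp [hS, hT]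
  simp only [h, sum_sub_distrib, sum_add_distrib, ← mul_sum, sum_boole, filter_mem_eq_inter,
    univ_inter]
  simp

theorem signVector_filter_eq_one {x : ι → ℤ} (hx : ∀ i, x i = 1 ∨ x i = -1) :
    signVector (univ.filter (x · = 1)) = x := by
  funext i
  rcases hx i with h | h <;> simp [signVector, h]

def balancedSignEquiv {k : ℕ} (hk : Fintype.card ι = 2 * k) :
    {S : Finset ι // S.card = k} ≃
      {x : ι → ℤ // (∀ i, x i = 1 ∨ x i = -1) ∧ ∑ i, x i = 0} where
  toFun S := ⟨signVector S.1, signVector_eq_one_or_neg_one S.1, by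
    rw [sum_signVector, S.2, hk]; push_cast; ring⟩
  invFun x := ⟨univ.filter (x.1 · = 1), by
    have h := x.2.2
    rw [← signVector_filter_eq_one x.2.1, sum_signVector, hk] at h
    omega⟩
  left_inv S := by ext i; simp [signVector]
  right_inv x := Subtype.ext (signVector_filter_eq_one x.2.1)

theorem card_le_choose_of_isIndepSet_comap {k p : ℕ} [Fact p.Prime] (hpk : p ≤ k)
    (hkp : k + 2 ≤ 2 * p) (hk : Fintype.card ι = 2 * k)
    (G : SimpleGraph {x : ι → ℤ // (∀ i, x i = 1 ∨ x i = -1) ∧ ∑ i, x i = 0})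
    (hG : ∀ x y, x ≠ y → ∑ i, x.1 i * y.1 i = 2 * (k : ℤ) - 4 * p → G.Adj x y)
    {t : Finset {S : Finset ι // S.card = k}}
    (ht : (G.comap (balancedSignEquiv hk).toEmbedding).IsIndepSet t) :
    t.card ≤ (Fintype.card ι).choose p := by
  have hFW := FranklWilson.card_le_choose_add_choose (p := p) hpk (by omega)
    (t.map (Function.Embedding.subtype _))
    (fun _ hA => by obtain ⟨A, -, rfl⟩ := mem_map.1 hA; exact A.2) ?_
  · rw [card_map, hk] at hFW
    exact hk ▸ hFW.trans (Nat.choose_sub_one_add_choose_sub_le hpk hkp)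
  simp only [mem_map, Function.Embedding.coe_subtype]
  rintro _ ⟨A, hA, rfl⟩ _ ⟨B, hB, rfl⟩ hAB hAB'
  have hAB : A ≠ B := ne_of_apply_ne Subtype.val hAB
  refine ht (mem_coe.2 hA) (mem_coe.2 hB) hAB ?_
  refine hG _ _ ((balancedSignEquiv hk).injective.ne hAB) ?_
  change ∑ i, signVector A.1 i * signVector B.1 i = _
  rw [sum_signVector_mul, A.2, B.2, hAB', hk]
  push_cast [Nat.cast_sub hpk]
  ring

end SignVector

/-- The graph on vectors in {-1,1}^m with zero coordinate sum, adjacency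
(x,y) = a = m - 4p, has chromatic number at least C(m, m/2)/C(m, p). -/
theorem stmt_4 (m p : ℕ) (hm : 4 ∣ m) (hp : p.Prime)
    (hp1 : m < 4 * p) (hp2 : 2 * p ≤ m)
    (G : SimpleGraph {x : Fin m → ℤ // (∀ i, x i = 1 ∨ x i = -1) ∧ ∑ i, x i = 0})
    (hG : ∀ x y, G.Adj x y ↔ x ≠ y ∧ ∑ i, x.1 i * y.1 i = (m : ℤ) - 4 * p) :
    (m.choose (m / 2) : ℕ∞) ≤ (m.choose p : ℕ∞) * G.chromaticNumber := by
  have : Fact p.Prime := ⟨hp⟩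
  obtain ⟨q, rfl⟩ := hm
  have hk : Fintype.card (Fin (4 * q)) = 2 * (2 * q) := by simp; ring
  have hindep := fun t => card_le_choose_of_isIndepSet_comap (p := p) (t := t) (by omega)
    (by omega) hk G fun x y hxy h => (hG x y).2 ⟨hxy, by rw [h]; push_cast; ring⟩
  rw [Fintype.card_fin] at hindep
  calc ((4 * q).choose (4 * q / 2) : ℕ∞)
      = Fintype.card {S : Finset (Fin (4 * q)) // S.card = 2 * q} := by
        rw [Fintype.card_finset_len, Fintype.card_fin]; congr 3; omega
    _ ≤ _ := (G.comap (balancedSignEquiv hk).toEmbedding).card_le_mul_chromaticNumber hindep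
    _ ≤ _ := by
        gcongr
        exact SimpleGraph.chromaticNumber_mono_of_hom (SimpleGraph.Embedding.comap _ _).toHom
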